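/- arXiv:1910.13912 — 4 statements merged into one kernel-verified Lean document; each statement's English description precedes it below -/
import Mathlib

section
/- Let G and H be graphs and let M_r(H,G) denote the minimum over all r-colourings of E(G) of the number of monochromatic copies of H. Then for every r-colouring of the edges of the blowup G[n], the number of monochromatic canonical copies of H in G[n] is at least M_r(H,G) · n^{v(H)}. -/
/-!
Double counting over the canonical copies of `G` in `G[n]`, i.e. the maps `g : V(G) → [n]`
selecting `(v, g v)` from each class. The colouring of `G[n]` induces on each of them an
`r`-colouring of `G` with at least `M_r(H,G)` monochromatic copies of `H`, and a canonical copy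
`(φ, f)` of `H` lies in exactly the `n ^ (v(G) - v(H))` canonical copies of `G` with `g ∘ φ = f`.
Hence `M_r(H,G) · n^{v(G)}` is at most `n^{v(G)-v(H)}` times the number of monochromatic
canonical copies of `H`.
-/

open SimpleGraph Finset

variable {α β : Type*}

/-- `φ` is a copy (injective graph homomorphism) of `H` in `G`. -/
def IsCopy (H : SimpleGraph α) (G : SimpleGraph β) (φ : α → β) : Prop :=
  Function.Injective φ ∧ ∀ ⦃u v⦄, H.Adj u v → G.Adj (φ u) (φ v)

/-- The copy `φ` of `H` is monochromatic under the edge colouring `c`. -/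
def Mono (H : SimpleGraph α) (r : ℕ) (c : Sym2 β → Fin r) (φ : α → β) : Prop :=
  ∃ i : Fin r, ∀ ⦃u v⦄, H.Adj u v → c s(φ u, φ v) = i

/-- Number of monochromatic copies of `H` in `G` under colouring `c`. -/
noncomputable def monoCount (H : SimpleGraph α) (G : SimpleGraph β) (r : ℕ)
    (c : Sym2 β → Fin r) : ℕ :=
  Nat.card {φ : α → β // IsCopy H G φ ∧ Mono H r c φ}

/-- `M r H G`: the minimum number of monochromatic copies of `H`
over all `r`-colourings of `G`. -/
noncomputable def M (r : ℕ) (H : SimpleGraph α) (G : SimpleGraph β) : ℕ :=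
  sInf (Set.range (monoCount H G r))

/-- `G` is `r`-Ramsey for `H`. -/
def IsRamsey (r : ℕ) (H : SimpleGraph α) (G : SimpleGraph β) : Prop :=
  ∀ c : Sym2 β → Fin r, ∃ φ : α → β, IsCopy H G φ ∧ Mono H r c φ

/-- The `n`-blowup of `G`. -/
def blowup (G : SimpleGraph β) (n : ℕ) : SimpleGraph (β × Fin n) where
  Adj a b := G.Adj a.1 b.1
  symm := ⟨fun _ _ h => G.adj_symm h⟩
  loopless := ⟨fun a h => G.irrefl (v := a.1) h⟩

/-- There is a monochromatic canonical copy of the blowup `H[t]` (part sizes `t u`)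
in the `n`-blowup of `G` under the colouring `c`. -/
def MonoCanonBlowup (H : SimpleGraph α) (G : SimpleGraph β) (n r : ℕ)
    (t : α → ℕ) (c : Sym2 (β × Fin n) → Fin r) : Prop :=
  ∃ (φ : α → β) (S : α → Finset (Fin n)) (i : Fin r),
    IsCopy H G φ ∧ (∀ u, (S u).card = t u) ∧
    ∀ ⦃u v⦄, H.Adj u v → ∀ a ∈ S u, ∀ b ∈ S v, c s((φ u, a), (φ v, b)) = i

variable {γ : Type*}

open Function

open Classical in
noncomputable def extensionsEquiv {φ : α → β} (hφ : Injective φ) (f : α → γ) :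
    {g : β → γ // g ∘ φ = f} ≃ ({b // b ∉ Set.range φ} → γ) where
  toFun g b := g.1 b
  invFun h := ⟨fun b => if hb : b ∈ Set.range φ then f ((Equiv.ofInjective φ hφ).symm ⟨b, hb⟩)
      else h ⟨b, hb⟩, by
    funext a
    simp [Equiv.ofInjective_symm_apply]⟩
  left_inv g := by
    obtain ⟨g, rfl⟩ := g
    ext b
    by_cases hb : b ∈ Set.range φ
    · obtain ⟨a, rfl⟩ := hb
      simp [Equiv.ofInjective_symm_apply]
    · simp [hb]
  right_inv h := by
    funext b
    simp [b.2]

theorem card_extensions_mul_pow [Fintype α] [Fintype β] [Fintype γ] {φ : α → β}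
    (hφ : Injective φ) (f : α → γ) :
    Nat.card {g : β → γ // g ∘ φ = f} * Fintype.card γ ^ Fintype.card α =
      Fintype.card γ ^ Fintype.card β := by
  classical
  rw [Nat.card_congr (extensionsEquiv hφ f), Nat.card_eq_fintype_card, Fintype.card_fun,
    Fintype.card_subtype_compl, Set.card_range_of_injective hφ, ← pow_add,
    Nat.sub_add_cancel (Fintype.card_le_of_injective φ hφ)]

def sigmaCompEquiv (P : (α → β) × (α → γ) → Prop) :
    (Σ g : β → γ, {φ : α → β // P (φ, g ∘ φ)}) ≃
      Σ p : {p : (α → β) × (α → γ) // P p}, {g : β → γ // g ∘ p.1.1 = p.1.2} where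
  toFun q := ⟨⟨(q.2.1, q.1 ∘ q.2.1), q.2.2⟩, ⟨q.1, rfl⟩⟩
  invFun q := ⟨q.2.1, ⟨q.1.1.1, by rw [q.2.2]; exact q.1.2⟩⟩
  left_inv _ := rfl
  right_inv := by
    rintro ⟨⟨⟨φ, f⟩, hp⟩, ⟨g, hg⟩⟩
    obtain rfl : g ∘ φ = f := hg
    rfl

theorem sum_card_mul_pow_eq_card_mul_pow [Fintype α] [Fintype β] [Fintype γ] [DecidableEq β]
    (P : (α → β) × (α → γ) → Prop) (hP : ∀ p, P p → Injective p.1) :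
    (∑ g : β → γ, Nat.card {φ : α → β // P (φ, g ∘ φ)}) * Fintype.card γ ^ Fintype.card α =
      Nat.card {p // P p} * Fintype.card γ ^ Fintype.card β := by
  classical
  calc (∑ g : β → γ, Nat.card {φ : α → β // P (φ, g ∘ φ)}) * Fintype.card γ ^ Fintype.card α
      = ∑ p : {p // P p}, Nat.card {g : β → γ // g ∘ p.1.1 = p.1.2} *
          Fintype.card γ ^ Fintype.card α := by
        rw [← Nat.card_sigma, Nat.card_congr (sigmaCompEquiv P), Nat.card_sigma, Finset.sum_mul]
    _ = ∑ _p : {p // P p}, Fintype.card γ ^ Fintype.card β :=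
        Finset.sum_congr rfl fun p _ => card_extensions_mul_pow (hP p.1 p.2) p.1.2
    _ = Nat.card {p // P p} * Fintype.card γ ^ Fintype.card β := by
        rw [Finset.sum_const, Finset.card_univ, smul_eq_mul, Nat.card_eq_fintype_card]

section Blowup

variable {r : ℕ} (H : SimpleGraph α) (G : SimpleGraph β)

theorem M_le_monoCount (c : Sym2 β → Fin r) : M r H G ≤ monoCount H G r c :=
  Nat.sInf_le ⟨c, rfl⟩

theorem M_le_of_forall_monoCount_le {N : ℕ} (h : ∀ c, monoCount H G r c ≤ N) : M r H G ≤ N := by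
  rcases isEmpty_or_nonempty (Sym2 β → Fin r) with hc | ⟨⟨c⟩⟩
  · simp [M, Set.range_eq_empty]
  · exact (M_le_monoCount H G c).trans (h c)

/-- `(φ, f)` encodes the canonical copy `u ↦ (φ u, f u)` of `H` in the blowup of `G`. -/
def IsMonoCanonicalCopy (c : Sym2 (β × γ) → Fin r) (p : (α → β) × (α → γ)) : Prop :=
  IsCopy H G p.1 ∧ ∃ i : Fin r, ∀ ⦃u v⦄, H.Adj u v → c s((p.1 u, p.2 u), (p.1 v, p.2 v)) = i

def inducedColouring (c : Sym2 (β × γ) → Fin r) (g : β → γ) : Sym2 β → Fin r :=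
  fun e => c (e.map fun b => (b, g b))

theorem monoCount_inducedColouring (c : Sym2 (β × γ) → Fin r) (g : β → γ) :
    monoCount H G r (inducedColouring c g) =
      Nat.card {φ : α → β // IsMonoCanonicalCopy H G c (φ, g ∘ φ)} :=
  rfl

theorem M_mul_pow_mul_pow_le [Fintype α] [Fintype β] [Fintype γ] (c : Sym2 (β × γ) → Fin r) :
    M r H G * Fintype.card γ ^ Fintype.card α * Fintype.card γ ^ Fintype.card β ≤
      Nat.card {p // IsMonoCanonicalCopy H G c p} * Fintype.card γ ^ Fintype.card β := by
  classical
  rw [← sum_card_mul_pow_eq_card_mul_pow _ fun p hp => hp.1.1]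
  calc M r H G * Fintype.card γ ^ Fintype.card α * Fintype.card γ ^ Fintype.card β
      = (∑ _g : β → γ, M r H G) * Fintype.card γ ^ Fintype.card α := by
        rw [Finset.sum_const, Finset.card_univ, Fintype.card_fun, smul_eq_mul]
        ring
    _ ≤ _ := Nat.mul_le_mul_right _ <| Finset.sum_le_sum fun g _ =>
        (M_le_monoCount H G (inducedColouring c g)).trans_eq (monoCount_inducedColouring H G c g)

theorem monoCount_le_card_isMonoCanonicalCopy [IsEmpty α] [Finite β] [Finite γ]
    (c' : Sym2 β → Fin r) (c : Sym2 (β × γ) → Fin r) :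
    monoCount H G r c' ≤ Nat.card {p // IsMonoCanonicalCopy H G c p} := by
  refine Nat.card_le_card_of_injective
    (fun φ => ⟨(φ.1, isEmptyElim), φ.2.1, ?_⟩) fun φ ψ h => Subtype.ext (congrArg (·.1.1) h)
  obtain ⟨i, -⟩ := φ.2.2
  exact ⟨i, fun u => isEmptyElim u⟩

end Blowup

/-- every `r`-colouring of the blowup `G[n]` has at least
`M_r(H,G) · n^{v(H)}` monochromatic canonical copies of `H`. -/
theorem mono_canonical_copies_lower_bound [Fintype α] [Fintype β]
    (r : ℕ) (H : SimpleGraph α) (G : SimpleGraph β) (n : ℕ)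
    (c : Sym2 (β × Fin n) → Fin r) :
    M r H G * n ^ Fintype.card α ≤
      Nat.card {p : (α → β) × (α → Fin n) // IsCopy H G p.1 ∧
        ∃ i : Fin r, ∀ ⦃u v⦄, H.Adj u v →
          c s((p.1 u, p.2 u), (p.1 v, p.2 v)) = i} := by
  -- `n ^ v(G)` may vanish while `n ^ v(H) = 1`, so an empty `H` is handled directly.
  rcases isEmpty_or_nonempty α with hα | hα
  · rw [Fintype.card_eq_zero, pow_zero, mul_one]
    exact M_le_of_forall_monoCount_le H G fun c' => monoCount_le_card_isMonoCanonicalCopy H G c' c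
  rcases Nat.eq_zero_or_pos n with rfl | hn
  · simp [zero_pow Fintype.card_ne_zero]
  have key := M_mul_pow_mul_pow_le H G c
  rw [Fintype.card_fin] at key
  exact Nat.le_of_mul_le_mul_right key (by positivity)
end

section
/- Let F be a bipartite graph with parts A and B, let s ≥ 1, and let t be the maximum size of a set B₀ ⊆ B such that F contains a complete bipartite subgraph with parts A₀ ⊆ A of size s and B₀. Then ∑_{v ∈ B} C(d(v), s) ≤ t · C(|A|, s), where d(v) is the degree of v in F and C(·,·) is the binomial coefficient. -/
open Finset

/-- double counting. If `t` is the maximum size of a set `B₀ ⊆ B`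
completely joined to some `s`-subset of `A`, then `∑_{v∈B} C(d(v),s) ≤ t·C(|A|,s)`. -/
theorem double_count_common_neighbourhoods {A B : Type*} [Fintype A] [Fintype B]
    (E : A → B → Prop) [∀ a b, Decidable (E a b)] (s : ℕ) (hs : 1 ≤ s) :
    ∑ v : B, ((Finset.univ.filter (fun a => E a v)).card).choose s ≤
      sSup {m : ℕ | ∃ (A₀ : Finset A) (B₀ : Finset B),
          A₀.card = s ∧ B₀.card = m ∧ ∀ a ∈ A₀, ∀ b ∈ B₀, E a b}
        * (Fintype.card A).choose s := by
  classical
  set T : Set ℕ := {m : ℕ | ∃ (A₀ : Finset A) (B₀ : Finset B),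
      A₀.card = s ∧ B₀.card = m ∧ ∀ a ∈ A₀, ∀ b ∈ B₀, E a b} with hT
  have hbdd : BddAbove T := by
    refine ⟨Fintype.card B, ?_⟩
    rintro m ⟨A₀, B₀, -, rfl, -⟩
    exact Finset.card_le_univ B₀
  have step1 : ∀ v : B,
      ((Finset.univ.filter (fun a => E a v)).card).choose s =
        ∑ X ∈ Finset.powersetCard s (Finset.univ : Finset A),
          (if X ⊆ Finset.univ.filter (fun a => E a v) then 1 else 0) := by
    intro v
    rw [← Finset.card_filter, ← Finset.card_powersetCard]
    congr 1
    ext X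
    simp [Finset.mem_powersetCard, and_comm]
  calc ∑ v : B, ((Finset.univ.filter (fun a => E a v)).card).choose s
      = ∑ v : B, ∑ X ∈ Finset.powersetCard s (Finset.univ : Finset A),
          (if X ⊆ Finset.univ.filter (fun a => E a v) then 1 else 0) := by
        exact Finset.sum_congr rfl fun v _ => step1 v
    _ = ∑ X ∈ Finset.powersetCard s (Finset.univ : Finset A),
          ∑ v : B, (if X ⊆ Finset.univ.filter (fun a => E a v) then 1 else 0) := by
        exact Finset.sum_comm
    _ ≤ ∑ X ∈ Finset.powersetCard s (Finset.univ : Finset A), sSup T := by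
        refine Finset.sum_le_sum fun X hX => ?_
        rw [Finset.mem_powersetCard] at hX
        have : ∑ v : B, (if X ⊆ Finset.univ.filter (fun a => E a v) then 1 else 0)
            = (Finset.univ.filter (fun v : B => X ⊆ Finset.univ.filter (fun a => E a v))).card := by
          rw [← Finset.card_filter]
        rw [this]
        refine le_csSup hbdd ?_
        refine ⟨X, Finset.univ.filter (fun v : B => X ⊆ Finset.univ.filter (fun a => E a v)),
          hX.2, rfl, ?_⟩
        intro a ha b hb
        rw [Finset.mem_filter] at hb
        have := hb.2 ha
        rw [Finset.mem_filter] at this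
        exact this.2
    _ = sSup T * (Fintype.card A).choose s := by
        rw [Finset.sum_const, smul_eq_mul, Finset.card_powersetCard, Finset.card_univ, mul_comm]
end

section
/- Let r ≥ 2 and let G, H be graphs with d(H) = 2e(H)/v(H) the average degree of H. Then the blowup Ramsey number B_r(G,H;t) = min{n : G[n] is canonically r-Ramsey for H[t]} satisfies B_r(G,H;t) ≥ (1 + o(1)) · (r^{d(H)/v(H)} / e) · t · r^{d(H)t/2} as t → ∞. -/
open SimpleGraph Finset

variable {α β : Type*}

/-!
Colour the edges of `G[n]` uniformly at random with `r` colours. A canonical copy of `H[t]` has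
`e(H) t²` edges, so it is monochromatic with probability `p = r^{1 - e(H) t²}`, an event
determined by the colours of its own edges. Copies sharing an edge have two vertices of `G[n]`
in common, so a copy shares an edge with at most `D = 2 e(H)² t² v(G)^{v(H)} (t/n)² C(n,t)^{v(H)}`
others. With `C(n,t) ≤ (en/t)^t` and `x = r^{d/v(H) + dt/2}`, `d = 2e(H)/v(H)`, this gives
`p D = O(t² (en/(tx))^{t v(H) - 2})`, because `(d/v(H) + dt/2)(t v(H) - 2) ≤ e(H) t²`. So if
`n ≤ (1 - ε) x t / e` and `t` is large, then `4 p (D + 1) ≤ 1` and the symmetric local lemma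
gives a colouring without monochromatic canonical copies.
-/

open scoped Classical

section LocalLemma

variable {E γ ι : Type*} [Fintype E] [DecidableEq E] [Fintype γ]

def DeterminedBy (A : Finset (E → γ)) (F : Finset E) : Prop :=
  ∀ ω ω' : E → γ, (∀ e ∈ F, ω e = ω' e) → ω ∈ A → ω' ∈ A

theorem card_inter_mul_card_eq_of_determinedBy_compl {A B : Finset (E → γ)} {F : Finset E}
    (hA : DeterminedBy A F) (hB : DeterminedBy B Fᶜ) :
    #(A ∩ B) * Fintype.card (E → γ) = #A * #B := by
  -- exchanging the `F`-coordinates of two colourings is a bijection `(A ∩ B) × Ω ≃ A × B`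
  let splice (ω ω' : E → γ) : E → γ := fun e => if e ∈ F then ω e else ω' e
  have on_F (ω ω' : E → γ) : ∀ e ∈ F, ω e = splice ω ω' e := fun e he => by simp [splice, he]
  have off_F (ω ω' : E → γ) : ∀ e ∈ Fᶜ, ω' e = splice ω ω' e := fun e he => by
    simp [splice, mem_compl.1 he]
  rw [← card_univ, ← card_product, ← card_product]
  refine card_nbij' (fun x => (splice x.1 x.2, splice x.2 x.1))
    (fun x => (splice x.1 x.2, splice x.2 x.1)) ?_ ?_ ?_ ?_
  · rintro ⟨ω, ω'⟩ h
    simp only [coe_product, Set.mem_prod, coe_inter, Set.mem_inter_iff, mem_coe] at h ⊢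
    exact ⟨hA _ _ (on_F ω ω') h.1.1, hB _ _ (off_F ω' ω) h.1.2⟩
  · rintro ⟨ω, ω'⟩ h
    simp only [coe_product, Set.mem_prod, coe_inter, Set.mem_inter_iff, mem_coe, coe_univ,
      Set.mem_univ, and_true] at h ⊢
    exact ⟨hA _ _ (on_F ω ω') h.1, hB _ _ (off_F ω ω') h.2⟩
  all_goals
    rintro ⟨ω, ω'⟩ -
    ext e <;> by_cases he : e ∈ F <;> simp [splice, he]

variable (A : ι → Finset (E → γ))

noncomputable def avoiding (S : Finset ι) : Finset (E → γ) := {ω | ∀ j ∈ S, ω ∉ A j}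

variable {A}

theorem avoiding_anti {S S' : Finset ι} (h : S' ⊆ S) : avoiding A S ⊆ avoiding A S' := by
  intro ω
  simp only [avoiding, mem_filter, mem_univ, true_and]
  exact fun hω j hj => hω j (h hj)

theorem avoiding_insert [DecidableEq ι] (i : ι) (S : Finset ι) :
    avoiding A (insert i S) = {ω ∈ avoiding A S | ω ∉ A i} := by
  ext ω
  simp only [avoiding, mem_filter, mem_univ, true_and, mem_insert, forall_eq_or_imp]
  tauto

variable {F : ι → Finset E} {p : ℝ} {D : ℕ}

theorem determinedBy_avoiding (hdet : ∀ i, DeterminedBy (A i) (F i)) {S : Finset ι} {i : ι}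
    (hS : ∀ j ∈ S, Disjoint (F j) (F i)) : DeterminedBy (avoiding A S) (F i)ᶜ := by
  intro ω ω' hω'ω hω
  simp only [avoiding, mem_filter, mem_univ, true_and] at hω ⊢
  refine fun j hj hj' => hω j hj (hdet j ω' ω (fun e he => (hω'ω e ?_).symm) hj')
  exact mem_compl.2 fun hei => disjoint_left.1 (hS j hj) he hei

theorem card_inter_avoiding_le [Nonempty γ] (hdet : ∀ i, DeterminedBy (A i) (F i))
    (hp : ∀ i, (#(A i) : ℝ) ≤ p * Fintype.card (E → γ)) {S : Finset ι} {i : ι}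
    (hS : ∀ j ∈ S, Disjoint (F j) (F i)) :
    (#(A i ∩ avoiding A S) : ℝ) ≤ p * #(avoiding A S) := by
  have key := card_inter_mul_card_eq_of_determinedBy_compl (hdet i) (determinedBy_avoiding hdet hS)
  have hΩ : (0 : ℝ) < Fintype.card (E → γ) := by exact_mod_cast Fintype.card_pos
  rw [← mul_le_mul_iff_of_pos_right hΩ]
  calc (#(A i ∩ avoiding A S) : ℝ) * Fintype.card (E → γ) = #(A i) * #(avoiding A S) := by
        exact_mod_cast key
    _ ≤ p * Fintype.card (E → γ) * #(avoiding A S) := by gcongr; exact hp i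
    _ = p * #(avoiding A S) * Fintype.card (E → γ) := by ring

theorem card_avoiding_le_add_sum [DecidableEq ι] (T S : Finset ι) :
    #(avoiding A T) ≤ #(avoiding A S) + ∑ j ∈ S \ T, #(A j ∩ avoiding A T) := by
  refine (card_le_card_sdiff_add_card (s := avoiding A T) (t := avoiding A S)).trans ?_
  rw [add_comm]
  refine add_le_add_right ((card_le_card (t := (S \ T).biUnion fun j => A j ∩ avoiding A T)
    fun ω hω => ?_).trans card_biUnion_le) _
  simp only [mem_sdiff, avoiding, mem_filter, mem_univ, true_and, not_forall, not_not] at hω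
  obtain ⟨hωT, j, hj, hωj⟩ := hω
  refine mem_biUnion.2 ⟨j, mem_sdiff.2 ⟨hj, fun hjT => hωT j hjT hωj⟩, ?_⟩
  simpa [avoiding] using ⟨hωj, hωT⟩

theorem card_inter_avoiding_le_two_mul [Fintype ι] [DecidableEq ι] [Nonempty γ]
    (hdet : ∀ i, DeterminedBy (A i) (F i)) (hp₀ : 0 ≤ p)
    (hp : ∀ i, (#(A i) : ℝ) ≤ p * Fintype.card (E → γ))
    (hD : ∀ i, #{j | j ≠ i ∧ ¬Disjoint (F j) (F i)} ≤ D) (hpD : 4 * p * D ≤ 1)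
    (S : Finset ι) {i : ι} (hi : i ∉ S) :
    (#(A i ∩ avoiding A S) : ℝ) ≤ 2 * p * #(avoiding A S) := by
  induction S using Finset.strongInduction generalizing i with
  | H S ih =>
  -- `A i` is independent of the events in `S₂`, and by induction the at most `D` events of
  -- `S \ S₂` remove at most half of `avoiding A S₂`
  set S₂ := {j ∈ S | Disjoint (F j) (F i)}
  have hdep : (#(S \ S₂) : ℝ) ≤ D := by
    refine Nat.cast_le.2 ((card_le_card fun j hj => ?_).trans (hD i))
    simp only [S₂, mem_sdiff, mem_filter, not_and] at hj
    exact mem_filter.2 ⟨mem_univ _, fun hji => hi (hji ▸ hj.1), hj.2 hj.1⟩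
  have hA : (#(A i ∩ avoiding A S) : ℝ) ≤ p * #(avoiding A S₂) :=
    calc (#(A i ∩ avoiding A S) : ℝ) ≤ #(A i ∩ avoiding A S₂) := by
          gcongr; exact avoiding_anti (filter_subset _ _)
      _ ≤ p * #(avoiding A S₂) := card_inter_avoiding_le hdet hp fun j hj => (mem_filter.1 hj).2
  have hsum : ∑ j ∈ S \ S₂, (#(A j ∩ avoiding A S₂) : ℝ) ≤
      #(S \ S₂) * (2 * p * #(avoiding A S₂)) := by
    rw [← nsmul_eq_mul]
    refine sum_le_card_nsmul _ _ _ fun j hj => ih S₂ ?_ fun hj₂ => (mem_sdiff.1 hj).2 hj₂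
    exact (filter_subset _ _).ssubset_of_not_subset fun h =>
      (mem_sdiff.1 hj).2 (h (mem_sdiff.1 hj).1)
  have hloss : (#(avoiding A S₂) : ℝ) ≤
      #(avoiding A S) + ∑ j ∈ S \ S₂, (#(A j ∩ avoiding A S₂) : ℝ) := by
    exact_mod_cast card_avoiding_le_add_sum S₂ S
  have hhalf : (#(S \ S₂) : ℝ) * (2 * p) ≤ 1 / 2 := by nlinarith
  have hN : (0 : ℝ) ≤ #(avoiding A S₂) := by positivity
  nlinarith

theorem symmetric_local_lemma [Fintype ι] [DecidableEq ι] [Nonempty γ]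
    (hdet : ∀ i, DeterminedBy (A i) (F i)) (hp₀ : 0 ≤ p)
    (hp : ∀ i, (#(A i) : ℝ) ≤ p * Fintype.card (E → γ))
    (hD : ∀ i, #{j | j ≠ i ∧ ¬Disjoint (F j) (F i)} ≤ D) (hpD : 4 * p * (D + 1) ≤ 1) :
    ∃ ω : E → γ, ∀ i, ω ∉ A i := by
  have hp₁ : 2 * p < 1 := by nlinarith [(Nat.cast_nonneg D : (0 : ℝ) ≤ D)]
  have hcond := card_inter_avoiding_le_two_mul hdet hp₀ hp hD (by nlinarith)
  have hgrow (S : Finset ι) : (1 - 2 * p) ^ #S * Fintype.card (E → γ) ≤ #(avoiding A S) := by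
    induction S using Finset.induction_on with
    | empty => simp [avoiding]
    | insert i S hi ih =>
      have hsplit := card_filter_add_card_filter_not (s := avoiding A S) (· ∈ A i)
      rw [← avoiding_insert, filter_mem_eq_inter, inter_comm] at hsplit
      have hsplit' : (#(avoiding A (insert i S)) : ℝ) =
          #(avoiding A S) - #(A i ∩ avoiding A S) := by
        rw [← hsplit]; push_cast; ring
      rw [hsplit', card_insert_of_notMem hi, pow_succ]
      nlinarith [hcond S hi]
  have hpos : (0 : ℝ) < #(avoiding A univ) :=
    (mul_pos (pow_pos (by linarith) _) (by exact_mod_cast Fintype.card_pos)).trans_le (hgrow univ)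
  obtain ⟨ω, hω⟩ := card_pos.1 (by exact_mod_cast hpos)
  exact ⟨ω, by simpa [avoiding] using hω⟩

end LocalLemma

section Colourings

variable {E γ : Type*} [Fintype E] [DecidableEq E] [Fintype γ]

theorem card_filter_forall_eq_mul_pow (F : Finset E) (i : γ) :
    #{c : E → γ | ∀ e ∈ F, c e = i} * Fintype.card γ ^ #F = Fintype.card (E → γ) := by
  have hpi : ({c : E → γ | ∀ e ∈ F, c e = i} : Finset (E → γ)) =
      Fintype.piFinset fun e => if e ∈ F then {i} else univ := by
    ext c
    simp only [mem_filter, mem_univ, true_and, Fintype.mem_piFinset]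
    refine ⟨fun h e => ?_, fun h e he => by simpa [he] using h e⟩
    split_ifs with he <;> simp [h e, he]
  rw [hpi, Fintype.card_piFinset, Fintype.card_fun]
  simp only [apply_ite card, card_singleton, card_univ, prod_ite, prod_const_one, one_mul,
    prod_const, ← pow_add]
  congr 1
  rw [← card_compl_add_card F]
  congr 2
  ext; simp

noncomputable def monochromatic (F : Finset E) : Finset (E → γ) := {c | ∃ i, ∀ e ∈ F, c e = i}

theorem card_monochromatic_mul_pow_le (F : Finset E) :
    #(monochromatic F : Finset (E → γ)) * Fintype.card γ ^ #F ≤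
      Fintype.card γ * Fintype.card (E → γ) := by
  have hunion : (monochromatic F : Finset (E → γ)) =
      univ.biUnion fun i => {c : E → γ | ∀ e ∈ F, c e = i} := by
    ext c; simp [monochromatic]
  calc #(monochromatic F : Finset (E → γ)) * Fintype.card γ ^ #F
      ≤ (∑ i : γ, #{c : E → γ | ∀ e ∈ F, c e = i}) * Fintype.card γ ^ #F := by
        rw [hunion]; gcongr; exact card_biUnion_le
    _ = Fintype.card γ * Fintype.card (E → γ) := by
        simp [sum_mul, card_filter_forall_eq_mul_pow]

end Colourings

section SetCounting

variable {X : Type*} [Fintype X]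

theorem card_filter_card_eq (t : ℕ) :
    #{s : Finset X | #s = t} = (Fintype.card X).choose t := by
  rw [← card_univ, ← card_powersetCard]
  congr 1
  ext s; simp

theorem card_filter_card_eq_and_mem_le [DecidableEq X] (t : ℕ) (a : X) :
    #{s : Finset X | #s = t ∧ a ∈ s} ≤ (Fintype.card X - 1).choose (t - 1) := by
  calc #{s : Finset X | #s = t ∧ a ∈ s}
      ≤ #((powersetCard (t - 1) (univ.erase a)).image (insert a)) := by
        refine card_le_card fun s hs => ?_
        simp only [mem_filter, mem_univ, true_and] at hs
        refine mem_image.2 ⟨s.erase a,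
          mem_powersetCard.2 ⟨erase_subset_erase a (subset_univ s), ?_⟩, insert_erase hs.2⟩
        rw [card_erase_of_mem hs.2, hs.1]
    _ ≤ (Fintype.card X - 1).choose (t - 1) := by
        refine card_image_le.trans ?_
        rw [card_powersetCard, card_erase_of_mem (mem_univ a), card_univ]

theorem card_filter_uniform_mem_mem_le [DecidableEq X] {ι : Type*} [Fintype ι] {u v : ι}
    (huv : u ≠ v) (t : ℕ) (a b : X) :
    #{S : ι → Finset X | (∀ x, #(S x) = t) ∧ a ∈ S u ∧ b ∈ S v} ≤
      (Fintype.card X - 1).choose (t - 1) ^ 2 *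
        (Fintype.card X).choose t ^ (Fintype.card ι - 2) := by
  set T : ι → Finset (Finset X) := fun x => {s | #s = t ∧ (x = u → a ∈ s) ∧ (x = v → b ∈ s)}
  have hpi : ({S : ι → Finset X | (∀ x, #(S x) = t) ∧ a ∈ S u ∧ b ∈ S v} : Finset _) =
      Fintype.piFinset T := by
    ext S
    simp only [T, mem_filter, mem_univ, true_and, Fintype.mem_piFinset]
    exact ⟨fun h x => ⟨h.1 x, fun hx => hx ▸ h.2.1, fun hx => hx ▸ h.2.2⟩,
      fun h => ⟨fun x => (h x).1, (h u).2.1 rfl, (h v).2.2 rfl⟩⟩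
  have hTu : #(T u) ≤ (Fintype.card X - 1).choose (t - 1) :=
    (card_le_card fun s hs => by simp_all [T]).trans (card_filter_card_eq_and_mem_le t a)
  have hTv : #(T v) ≤ (Fintype.card X - 1).choose (t - 1) :=
    (card_le_card fun s hs => by simp_all [T]).trans (card_filter_card_eq_and_mem_le t b)
  have hT (x : ι) : #(T x) ≤ (Fintype.card X).choose t :=
    (card_le_card fun s hs => by simp_all [T]).trans (card_filter_card_eq t).le
  have hv : v ∈ univ.erase u := mem_erase.2 ⟨huv.symm, mem_univ v⟩
  have hrest : ∏ x ∈ (univ.erase u).erase v, #(T x) ≤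
      (Fintype.card X).choose t ^ (Fintype.card ι - 2) := by
    refine (prod_le_pow_card _ _ _ fun x _ => hT x).trans_eq ?_
    rw [card_erase_of_mem hv, card_erase_of_mem (mem_univ u), card_univ, Nat.sub_sub]
  rw [hpi, Fintype.card_piFinset, ← mul_prod_erase _ _ (mem_univ u), ← mul_prod_erase _ _ hv, sq,
    mul_assoc]
  exact Nat.mul_le_mul hTu (Nat.mul_le_mul hTv hrest)

end SetCounting

section CanonicalCopies

abbrev CanonCopy (H : SimpleGraph α) (G : SimpleGraph β) (n t : ℕ) :=
  {k : (α → β) × (α → Finset (Fin n)) // IsCopy H G k.1 ∧ ∀ u, #(k.2 u) = t}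

theorem adj_out_of_mem_edgeSet {H : SimpleGraph α} {e : Sym2 α} (he : e ∈ H.edgeSet) :
    H.Adj e.out.1 e.out.2 := by
  rwa [← mem_edgeSet, Sym2.mk, e.out_eq]

variable [Fintype α] (H : SimpleGraph α) {n : ℕ}

/-- Each edge `e` of `H` is oriented as `e.out`, which makes this parametrisation injective when
`φ` is. -/
noncomputable def canonEdges (φ : α → β) (S : α → Finset (Fin n)) : Finset (Sym2 (β × Fin n)) :=
  (H.edgeFinset.sigma fun e => S e.out.1 ×ˢ S e.out.2).image
    fun x => s((φ x.1.out.1, x.2.1), (φ x.1.out.2, x.2.2))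

variable {H}

theorem exists_of_mem_canonEdges {φ : α → β} {S : α → Finset (Fin n)} {w : Sym2 (β × Fin n)}
    (hw : w ∈ canonEdges H φ S) :
    ∃ u v, H.Adj u v ∧ ∃ a ∈ S u, ∃ b ∈ S v, s((φ u, a), (φ v, b)) = w := by
  obtain ⟨⟨e, a, b⟩, hx, rfl⟩ := mem_image.1 hw
  simp only [mem_sigma, mem_product, mem_edgeFinset] at hx
  exact ⟨e.out.1, e.out.2, adj_out_of_mem_edgeSet hx.1, a, hx.2.1, b, hx.2.2, rfl⟩

theorem card_canonEdges {φ : α → β} (hφ : Function.Injective φ) {S : α → Finset (Fin n)} {t : ℕ}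
    (hS : ∀ u, #(S u) = t) : #(canonEdges H φ S) = Nat.card H.edgeSet * t ^ 2 := by
  rw [canonEdges, card_image_of_injOn, card_sigma]
  · simp [hS, sq, Nat.card_eq_fintype_card, edgeFinset_card]
  rintro ⟨e, a, b⟩ hx ⟨e', a', b'⟩ hx' h
  simp only [coe_sigma, Set.mem_sigma_iff, mem_coe, mem_edgeFinset, coe_product,
    Set.mem_prod] at hx hx'
  have he : e = e' := by
    have h₁ : Sym2.map φ s(e.out.1, e.out.2) = Sym2.map φ s(e'.out.1, e'.out.2) := by
      simpa using congrArg (Sym2.map Prod.fst) h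
    simpa [Sym2.mk, Quot.out_eq] using Sym2.map.injective hφ h₁
  subst he
  rcases Sym2.eq_iff.1 h with ⟨h₁, h₂⟩ | ⟨h₁, h₂⟩
  · simp_all
  · exact absurd (hφ (Prod.ext_iff.1 h₁).1) (adj_out_of_mem_edgeSet hx.1).ne

variable (G : SimpleGraph β) [Fintype β] {t : ℕ}

theorem card_filter_mem_canonEdges_le (w : Sym2 (β × Fin n)) :
    #{k : CanonCopy H G n t | w ∈ canonEdges H k.1.1 k.1.2} ≤
      2 * Nat.card H.edgeSet * (Fintype.card β ^ Fintype.card α *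
        ((n - 1).choose (t - 1) ^ 2 * n.choose t ^ (Fintype.card α - 2))) := by
  induction w using Sym2.ind with | _ z₁ z₂ =>
  let through (d : H.Dart) : Finset ((α → β) × (α → Finset (Fin n))) :=
    (univ : Finset (α → β)) ×ˢ
      ({S | (∀ x, #(S x) = t) ∧ z₁.2 ∈ S d.fst ∧ z₂.2 ∈ S d.snd} : Finset (α → Finset (Fin n)))
  have hthrough (d : H.Dart) : #(through d) ≤ Fintype.card β ^ Fintype.card α *
      ((n - 1).choose (t - 1) ^ 2 * n.choose t ^ (Fintype.card α - 2)) := by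
    rw [card_product, card_univ, Fintype.card_fun]
    gcongr
    simpa using card_filter_uniform_mem_mem_le d.adj.ne t z₁.2 z₂.2
  calc #{k : CanonCopy H G n t | s(z₁, z₂) ∈ canonEdges H k.1.1 k.1.2}
      ≤ #(univ.biUnion through) := by
        refine card_le_card_of_injOn Subtype.val (fun k hk => ?_) Subtype.val_injective.injOn
        simp only [coe_filter, mem_univ, true_and, Set.mem_ofPred_eq] at hk
        obtain ⟨u, v, huv, a, ha, b, hb, h⟩ := exists_of_mem_canonEdges hk
        simp only [through, mem_coe, mem_biUnion, mem_univ, true_and, mem_product, mem_filter]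
        rcases Sym2.eq_iff.1 h with ⟨rfl, rfl⟩ | ⟨rfl, rfl⟩
        · exact ⟨⟨(u, v), huv⟩, k.2.2, ha, hb⟩
        · exact ⟨⟨(v, u), huv.symm⟩, k.2.2, hb, ha⟩
    _ ≤ ∑ d : H.Dart, #(through d) := card_biUnion_le
    _ ≤ 2 * Nat.card H.edgeSet * (Fintype.card β ^ Fintype.card α *
          ((n - 1).choose (t - 1) ^ 2 * n.choose t ^ (Fintype.card α - 2))) := by
        refine (sum_le_card_nsmul _ _ _ fun d _ => hthrough d).trans_eq ?_
        simp [dart_card_eq_twice_card_edges, Nat.card_eq_fintype_card, edgeFinset_card]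

def canonDegreeBound (m B V n t : ℕ) : ℕ :=
  2 * m ^ 2 * t ^ 2 * B ^ V * ((n - 1).choose (t - 1) ^ 2 * n.choose t ^ (V - 2))

theorem card_filter_not_disjoint_canonEdges_le (k : CanonCopy H G n t) :
    #{j : CanonCopy H G n t | ¬Disjoint (canonEdges H j.1.1 j.1.2) (canonEdges H k.1.1 k.1.2)} ≤
      canonDegreeBound (Nat.card H.edgeSet) (Fintype.card β) (Fintype.card α) n t := by
  calc #{j : CanonCopy H G n t | ¬Disjoint (canonEdges H j.1.1 j.1.2) (canonEdges H k.1.1 k.1.2)}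
      ≤ #((canonEdges H k.1.1 k.1.2).biUnion
          fun w => {j : CanonCopy H G n t | w ∈ canonEdges H j.1.1 j.1.2}) := by
        refine card_le_card fun j hj => ?_
        obtain ⟨w, hwj, hwk⟩ := not_disjoint_iff.1 (mem_filter.1 hj).2
        exact mem_biUnion.2 ⟨w, hwk, mem_filter.2 ⟨mem_univ j, hwj⟩⟩
    _ ≤ ∑ w ∈ canonEdges H k.1.1 k.1.2, #{j : CanonCopy H G n t | w ∈ canonEdges H j.1.1 j.1.2} :=
        card_biUnion_le
    _ ≤ canonDegreeBound (Nat.card H.edgeSet) (Fintype.card β) (Fintype.card α) n t := by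
        refine (sum_le_card_nsmul _ _ _ fun w _ => card_filter_mem_canonEdges_le G w).trans_eq ?_
        rw [card_canonEdges k.2.1.1 k.2.2, smul_eq_mul, canonDegreeBound]
        ring

theorem exists_not_monoCanonBlowup {r : ℕ} (hr : 0 < r)
    (h : 4 * ((r : ℝ) / r ^ (Nat.card H.edgeSet * t ^ 2)) *
      (canonDegreeBound (Nat.card H.edgeSet) (Fintype.card β) (Fintype.card α) n t + 1) ≤ 1) :
    ∃ c : Sym2 (β × Fin n) → Fin r, ¬MonoCanonBlowup H G n r (fun _ => t) c := by
  have : Nonempty (Fin r) := ⟨⟨0, hr⟩⟩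
  let F (k : CanonCopy H G n t) := canonEdges H k.1.1 k.1.2
  let A (k : CanonCopy H G n t) : Finset (Sym2 (β × Fin n) → Fin r) := monochromatic (F k)
  have hdet (k : CanonCopy H G n t) : DeterminedBy (A k) (F k) := by
    intro c c' hcc' hc
    simp only [A, monochromatic, mem_filter, mem_univ, true_and] at hc ⊢
    obtain ⟨i, hi⟩ := hc
    exact ⟨i, fun w hw => (hcc' w hw).symm.trans (hi w hw)⟩
  have hp (k : CanonCopy H G n t) : (#(A k) : ℝ) ≤
      r / r ^ (Nat.card H.edgeSet * t ^ 2) * Fintype.card (Sym2 (β × Fin n) → Fin r) := by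
    have hcount := card_monochromatic_mul_pow_le (γ := Fin r) (F k)
    rw [card_canonEdges k.2.1.1 k.2.2, Fintype.card_fin] at hcount
    rw [div_mul_eq_mul_div, le_div_iff₀ (by positivity)]
    exact_mod_cast hcount
  have hD (k : CanonCopy H G n t) : #{j | j ≠ k ∧ ¬Disjoint (F j) (F k)} ≤
      canonDegreeBound (Nat.card H.edgeSet) (Fintype.card β) (Fintype.card α) n t :=
    (card_le_card fun j hj => mem_filter.2 ⟨mem_univ j, (mem_filter.1 hj).2.2⟩).trans
      (card_filter_not_disjoint_canonEdges_le G k)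
  obtain ⟨c, hc⟩ := symmetric_local_lemma hdet (by positivity) hp hD h
  refine ⟨c, fun ⟨φ, S, i, hφ, hS, hmono⟩ => hc ⟨(φ, S), hφ, hS⟩ ?_⟩
  simp only [A, monochromatic, mem_filter, mem_univ, true_and]
  refine ⟨i, fun w hw => ?_⟩
  obtain ⟨u, v, huv, a, ha, b, hb, rfl⟩ := exists_of_mem_canonEdges hw
  exact hmono huv a ha b hb

end CanonicalCopies

section Estimates

open Real

theorem choose_le_exp_mul_div_pow (n t : ℕ) : (n.choose t : ℝ) ≤ (exp 1 * n / t) ^ t := by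
  rcases t.eq_zero_or_pos with rfl | ht
  · simp
  have ht' : (0 : ℝ) < t := by exact_mod_cast ht
  calc (n.choose t : ℝ) ≤ n ^ t / t.factorial := Nat.choose_le_pow_div t n
    _ = (n / t) ^ t * (t ^ t / t.factorial) := by rw [div_pow]; field_simp
    _ ≤ (n / t) ^ t * exp t := by gcongr; exact pow_div_factorial_le_exp _ ht'.le t
    _ = (exp 1 * n / t) ^ t := by rw [← exp_one_pow, ← mul_pow]; ring

theorem choose_pred_sq_mul_choose_pow_le {n t V : ℕ} (ht : 1 ≤ t) (htn : t ≤ n) (hV : 2 ≤ V) :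
    (((n - 1).choose (t - 1) ^ 2 * n.choose t ^ (V - 2) : ℕ) : ℝ) ≤
      exp 1 ^ 2 * (exp 1 * n / t) ^ (t * V - 2) := by
  set x := exp 1 * n / t
  have hn : (0 : ℝ) < n := by exact_mod_cast (ht.trans htn)
  have hpascal : (n : ℝ) * (n - 1).choose (t - 1) = t * n.choose t := by
    have := Nat.add_one_mul_choose_eq (n - 1) (t - 1)
    rw [Nat.sub_add_cancel (ht.trans htn), Nat.sub_add_cancel ht] at this
    rw [mul_comm (t : ℝ)]
    exact_mod_cast this
  have hchoose : (n.choose t : ℝ) ^ V ≤ x ^ 2 * x ^ (t * V - 2) := by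
    rw [← pow_add, Nat.add_sub_cancel' (by nlinarith), pow_mul]
    exact pow_le_pow_left₀ (by positivity) (choose_le_exp_mul_div_pow n t) V
  obtain ⟨k, rfl⟩ : ∃ k, V = k + 2 := ⟨V - 2, by omega⟩
  rw [← mul_le_mul_iff_of_pos_left (pow_pos hn 2)]
  push_cast
  calc (n : ℝ) ^ 2 * ((n - 1).choose (t - 1) ^ 2 * n.choose t ^ (k + 2 - 2))
      = t ^ 2 * n.choose t ^ (k + 2) := by
        rw [Nat.add_sub_cancel, ← mul_assoc, ← mul_pow, hpascal]; ring
    _ ≤ t ^ 2 * (x ^ 2 * x ^ (t * (k + 2) - 2)) := by gcongr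
    _ = n ^ 2 * (exp 1 ^ 2 * x ^ (t * (k + 2) - 2)) := by
        simp only [x]; field_simp

theorem pow_le_pow_mul_rpow {x c r a : ℝ} {k M : ℕ} (hx : 0 ≤ x) (hxc : x ≤ c * r ^ a)
    (hr : 1 ≤ r) (haM : a * k ≤ M) : x ^ k ≤ c ^ k * r ^ M := by
  have hra : 0 < r ^ a := rpow_pos_of_pos (by linarith) a
  have hc : 0 ≤ c := nonneg_of_mul_nonneg_left (hx.trans hxc) hra
  calc x ^ k ≤ (c * r ^ a) ^ k := pow_le_pow_left₀ hx hxc k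
    _ = c ^ k * r ^ (a * k) := by rw [mul_pow, rpow_mul_natCast (by linarith)]
    _ ≤ c ^ k * r ^ M := by
        gcongr
        rw [← rpow_natCast]
        exact rpow_le_rpow_of_exponent_le hr haM

noncomputable def blowupRamseyBound (r m V t : ℕ) (ε : ℝ) : ℝ :=
  (1 - ε) * ((r : ℝ) ^ ((2 * (m : ℝ) / (V : ℝ)) / (V : ℝ)) / exp 1) * (t : ℝ) *
    (r : ℝ) ^ (2 * (m : ℝ) / (V : ℝ) * (t : ℝ) / 2)

theorem blowupRamseyBound_anti {r m V t : ℕ} {ε ε' : ℝ} (h : ε' ≤ ε) :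
    blowupRamseyBound r m V t ε ≤ blowupRamseyBound r m V t ε' := by
  unfold blowupRamseyBound
  gcongr

theorem blowupRamseyBound_zero_le {r V t n : ℕ} {ε : ℝ} (hε : 0 ≤ ε) (htn : t ≤ n) :
    blowupRamseyBound r 0 V t ε ≤ n := by
  have he : 1 - ε ≤ exp 1 := by linarith [add_one_le_exp 1]
  have ht : (t : ℝ) ≤ n := by exact_mod_cast htn
  simp only [blowupRamseyBound, CharP.cast_eq_zero, mul_zero, zero_div, zero_mul, rpow_zero,
    mul_one]
  calc (1 - ε) * (1 / exp 1) * t ≤ 1 * t := by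
        gcongr
        rw [mul_one_div, div_le_one (exp_pos 1)]
        exact he
    _ ≤ n := by rwa [one_mul]

theorem div_pow_mul_canonDegreeBound_le {r m B V t n : ℕ} {ε : ℝ} (hr : 1 ≤ r) (hV : 2 ≤ V)
    (ht : 1 ≤ t) (htn : t ≤ n) (hn : (n : ℝ) ≤ blowupRamseyBound r m V t ε) :
    (r : ℝ) / r ^ (m * t ^ 2) * canonDegreeBound m B V n t ≤
      2 * m ^ 2 * B ^ V * r * exp 1 ^ 2 * (t ^ 2 * (1 - ε) ^ (t * V - 2)) := by
  have hr' : (1 : ℝ) ≤ r := by exact_mod_cast hr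
  have ht' : (0 : ℝ) < t := by exact_mod_cast ht
  have hV' : (0 : ℝ) < V := by positivity
  set a : ℝ := 2 * m / V / V + 2 * m / V * t / 2
  have hx : exp 1 * n / t ≤ (1 - ε) * (r : ℝ) ^ a := by
    rw [div_le_iff₀ ht', rpow_add (by positivity)]
    calc exp 1 * n ≤ exp 1 * blowupRamseyBound r m V t ε := by gcongr
      _ = (1 - ε) * (r ^ (2 * m / V / V : ℝ) * r ^ (2 * m / V * t / 2 : ℝ)) * t := by
        unfold blowupRamseyBound; field_simp
  have ha : a * ↑(t * V - 2) ≤ ↑(m * t ^ 2) := by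
    have h2 : 2 ≤ t * V := by nlinarith
    have : (↑(m * t ^ 2) : ℝ) - a * ↑(t * V - 2) = 4 * m / V ^ 2 := by
      rw [Nat.cast_sub h2]; simp only [a]; push_cast; field_simp; ring
    nlinarith [this, (by positivity : (0 : ℝ) ≤ 4 * m / V ^ 2)]
  have hpow := pow_le_pow_mul_rpow (by positivity) hx hr' ha
  have hQ := choose_pred_sq_mul_choose_pow_le ht htn hV
  have hrpos : (0 : ℝ) < r ^ (m * t ^ 2) := by positivity
  calc (r : ℝ) / r ^ (m * t ^ 2) * canonDegreeBound m B V n t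
      = r / r ^ (m * t ^ 2) * (2 * m ^ 2 * t ^ 2 * B ^ V) *
          (((n - 1).choose (t - 1) ^ 2 * n.choose t ^ (V - 2) : ℕ) : ℝ) := by
        simp only [canonDegreeBound]; push_cast; ring
    _ ≤ r / r ^ (m * t ^ 2) * (2 * m ^ 2 * t ^ 2 * B ^ V) *
          (exp 1 ^ 2 * ((1 - ε) ^ (t * V - 2) * r ^ (m * t ^ 2))) := by
        gcongr; exact hQ.trans (by gcongr)
    _ = 2 * m ^ 2 * B ^ V * r * exp 1 ^ 2 * (t ^ 2 * (1 - ε) ^ (t * V - 2)) := by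
        field_simp

end Estimates

section Asymptotics

open Filter Real

theorem le_of_monoCanonBlowup [Fintype α] [Nonempty α] {H : SimpleGraph α} {G : SimpleGraph β}
    {n r t : ℕ} {c : Sym2 (β × Fin n) → Fin r} (h : MonoCanonBlowup H G n r (fun _ => t) c) :
    t ≤ n := by
  obtain ⟨-, S, -, -, hS, -⟩ := h
  simpa [hS] using card_le_univ (S (Classical.arbitrary α))

theorem two_le_card_of_card_edgeSet_pos [Fintype α] {H : SimpleGraph α}
    (hm : 0 < Nat.card H.edgeSet) : 2 ≤ Fintype.card α := by
  by_contra! h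
  have := H.card_edgeFinset_le_card_choose_two
  rw [Nat.choose_eq_zero_of_lt h, Nat.le_zero, card_eq_zero, edgeFinset_eq_empty] at this
  simp [this] at hm

theorem eventually_blowupRamseyBound_le [Fintype α] [Fintype β] {r : ℕ} (hr : 2 ≤ r)
    {H : SimpleGraph α} (G : SimpleGraph β) (hm : 0 < Nat.card H.edgeSet) {ε : ℝ} (hε : 0 < ε)
    (hε₁ : ε < 1) :
    ∀ᶠ t in atTop, ∀ n, (∀ c : Sym2 (β × Fin n) → Fin r, MonoCanonBlowup H G n r (fun _ => t) c) →
      blowupRamseyBound r (Nat.card H.edgeSet) (Fintype.card α) t ε ≤ n := by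
  set m := Nat.card H.edgeSet
  set V := Fintype.card α
  have hV : 2 ≤ V := two_le_card_of_card_edgeSet_pos hm
  have : Nonempty α := Fintype.card_pos_iff.1 (by omega)
  set C : ℝ := 2 * m ^ 2 * Fintype.card β ^ V * r * exp 1 ^ 2
  have hlim := (tendsto_pow_const_mul_const_pow_of_lt_one 2 (by linarith : 0 ≤ 1 - ε)
    (by linarith : 1 - ε < 1)).const_mul C
  rw [mul_zero] at hlim
  filter_upwards [eventually_ge_atTop 2,
    hlim.eventually (gt_mem_nhds (by norm_num : (0 : ℝ) < 1 / 8))] with t ht hsmall n hR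
  have htn : t ≤ n := le_of_monoCanonBlowup (hR fun _ => ⟨0, by omega⟩)
  by_contra! hlt
  refine (exists_not_monoCanonBlowup G (by omega : 0 < r) ?_).elim fun c hc => hc (hR c)
  have hpD := div_pow_mul_canonDegreeBound_le (B := Fintype.card β) (by omega) hV (by omega) htn
    hlt.le
  have hdecay : (1 - ε) ^ (t * V - 2) ≤ (1 - ε) ^ t :=
    pow_le_pow_of_le_one (by linarith) (by linarith) (by have := Nat.mul_le_mul_left t hV; omega)
  have hp : (r : ℝ) / r ^ (m * t ^ 2) ≤ 1 / 8 := by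
    have hr' : (2 : ℝ) ≤ r := by exact_mod_cast hr
    have h8 : 8 * (r : ℝ) ≤ r ^ (m * t ^ 2) :=
      calc 8 * (r : ℝ) = 2 ^ 3 * r := by norm_num
        _ ≤ r ^ 3 * r := by gcongr
        _ = r ^ 4 := by ring
        _ ≤ r ^ (m * t ^ 2) := pow_le_pow_right₀ (by linarith) (by nlinarith)
    rw [div_le_iff₀ (by positivity)]
    linarith
  calc 4 * ((r : ℝ) / r ^ (m * t ^ 2)) * (canonDegreeBound m (Fintype.card β) V n t + 1)
      = 4 * ((r : ℝ) / r ^ (m * t ^ 2) * canonDegreeBound m (Fintype.card β) V n t) +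
          4 * ((r : ℝ) / r ^ (m * t ^ 2)) := by ring
    _ ≤ 4 * (C * (t ^ 2 * (1 - ε) ^ t)) + 4 * (1 / 8) := by
        gcongr 4 * ?_ + 4 * ?_
        exact hpD.trans (by gcongr)
    _ ≤ 1 := by linarith

end Asymptotics

/-- Theorem 3.1: lower bound for the blowup Ramsey numbers:
`B_r(G,H;t) ≥ (1+o(1))·(r^{d(H)/v(H)}/e)·t·r^{d(H)t/2}` as `t → ∞`, phrased as:
for every `ε > 0` there is `T` such that for `t ≥ T`, any `n` for which `G[n]`
is canonically `r`-Ramsey for `H[t]` satisfies the corresponding bound. -/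
theorem blowup_ramsey_lower_bound [Fintype α] [Fintype β] [Nonempty α]
    (r : ℕ) (hr : 2 ≤ r) (H : SimpleGraph α) (G : SimpleGraph β) :
    ∀ ε : ℝ, 0 < ε → ∃ T : ℕ, ∀ t : ℕ, T ≤ t → ∀ n : ℕ,
      (∀ c : Sym2 (β × Fin n) → Fin r, MonoCanonBlowup H G n r (fun _ => t) c) →
      (1 - ε) *
        ((r : ℝ) ^ ((2 * (Nat.card H.edgeSet : ℝ) / (Fintype.card α : ℝ)) /
            (Fintype.card α : ℝ)) / Real.exp 1) *
        (t : ℝ) *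
        (r : ℝ) ^ (2 * (Nat.card H.edgeSet : ℝ) / (Fintype.card α : ℝ) * (t : ℝ) / 2)
      ≤ (n : ℝ) := by
  intro ε hε
  rcases (Nat.card H.edgeSet).eq_zero_or_pos with hm | hm
  · refine ⟨0, fun t _ n hR => ?_⟩
    have := blowupRamseyBound_zero_le (r := r) (V := Fintype.card α) hε.le
      (le_of_monoCanonBlowup (hR fun _ => ⟨0, by omega⟩))
    rwa [← hm] at this
  · obtain ⟨T, hT⟩ := Filter.eventually_atTop.1 <| eventually_blowupRamseyBound_le hr G hm
      (lt_min hε one_half_pos) (min_lt_of_right_lt one_half_lt_one)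
    exact ⟨T, fun t ht n hR => (blowupRamseyBound_anti (min_le_left ε _)).trans (hT t ht n hR)⟩
end

section
/- For t ≥ 1 and r ≥ 2, consider the complete graph K_{t²+1} with a distinguished vertex v and t disjoint t-cliques Q₁,...,Q_t in K_{t²+1} − v. Then every 2-colouring of the edges of K_{t²+1} red/blue in which all edges between different Q_i's are red contains a monochromatic K_{t+1}. -/
open Finset

/-- Burr–Erdős–Lovász configuration: in `K_{t²+1}` with a
distinguished vertex `v` and `t` disjoint `t`-cliques `Q₁,…,Q_t` avoiding `v`,
any 2-colouring (`true` = red, `false` = blue) of the pairs in which all edges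
between distinct `Q_i`'s are red contains a monochromatic `K_{t+1}`. -/
theorem bel_forced_monochromatic (t : ℕ) (ht : 1 ≤ t)
    {V : Type*} [Fintype V] [DecidableEq V] (hV : Fintype.card V = t ^ 2 + 1)
    (v : V) (Q : Fin t → Finset V)
    (hdisj : ∀ i j, i ≠ j → Disjoint (Q i) (Q j))
    (hv : ∀ i, v ∉ Q i) (hcard : ∀ i, (Q i).card = t)
    (c : Sym2 V → Bool)
    (hred : ∀ i j, i ≠ j → ∀ x ∈ Q i, ∀ y ∈ Q j, c s(x, y) = true) :
    ∃ (b : Bool) (T : Finset V), T.card = t + 1 ∧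
      ∀ x ∈ T, ∀ y ∈ T, x ≠ y → c s(x, y) = b := by
  have csymm : ∀ x y : V, c s(x, y) = c s(y, x) := by
    intro x y; rw [Sym2.eq_swap]
  have hdis : ∀ {a : V} {i j : Fin t}, i ≠ j → a ∈ Q i → a ∉ Q j := by
    intro a i j hij ha
    exact Finset.disjoint_left.mp (hdisj i j hij) ha
  by_cases hA : ∃ i, ∃ x ∈ Q i, ∃ y ∈ Q i, x ≠ y ∧ c s(x, y) = true
  · -- some clique has a red edge
    obtain ⟨i, x, hx, y, hy, hxy, hc⟩ := hA
    have hne : ∀ j, (Q j).Nonempty := fun j =>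
      Finset.card_pos.mp (by rw [hcard]; omega)
    choose f hf using hne
    refine ⟨true, insert x (insert y ((Finset.univ.erase i).image f)), ?_, ?_⟩
    · have hinj : ∀ a ∈ Finset.univ.erase i, ∀ b ∈ Finset.univ.erase i,
          f a = f b → a = b := by
        intro a _ b _ hab
        by_contra hne'
        exact hdis hne' (hf a) (hab ▸ hf b)
      have hcard1 : ((Finset.univ.erase i).image f).card = t - 1 := by
        rw [Finset.card_image_of_injOn hinj, Finset.card_erase_of_mem (by simp),
          Finset.card_univ, Fintype.card_fin]
      have hyni : y ∉ (Finset.univ.erase i).image f := by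
        simp only [Finset.mem_image, Finset.mem_erase]
        rintro ⟨j, ⟨hji, _⟩, rfl⟩
        exact hdis hji (hf j) hy
      have hxni : x ∉ insert y ((Finset.univ.erase i).image f) := by
        simp only [Finset.mem_insert, Finset.mem_image, Finset.mem_erase]
        rintro (rfl | ⟨j, ⟨hji, _⟩, rfl⟩)
        · exact hxy rfl
        · exact hdis hji (hf j) hx
      rw [Finset.card_insert_of_notMem hxni, Finset.card_insert_of_notMem hyni,
        hcard1]
      omega
    · intro a ha b hb hab
      -- classify membership
      have mem : ∀ z ∈ insert x (insert y ((Finset.univ.erase i).image f)),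
          (z ∈ Q i ∧ (z = x ∨ z = y)) ∨ ∃ j, j ≠ i ∧ z = f j := by
        intro z hz
        simp only [Finset.mem_insert, Finset.mem_image, Finset.mem_erase] at hz
        rcases hz with rfl | rfl | ⟨j, ⟨hji, _⟩, rfl⟩
        · exact Or.inl ⟨hx, Or.inl rfl⟩
        · exact Or.inl ⟨hy, Or.inr rfl⟩
        · exact Or.inr ⟨j, hji, rfl⟩
      rcases mem a ha with ⟨haQ, haxy⟩ | ⟨j, hji, rfl⟩ <;>
        rcases mem b hb with ⟨hbQ, hbxy⟩ | ⟨k, hki, rfl⟩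
      · rcases haxy with rfl | rfl <;> rcases hbxy with rfl | rfl
        · exact absurd rfl hab
        · exact hc
        · rw [csymm]; exact hc
        · exact absurd rfl hab
      · exact hred i k (Ne.symm hki) a haQ (f k) (hf k)
      · exact hred j i hji (f j) (hf j) b hbQ
      · have hjk : j ≠ k := fun h => hab (by rw [h])
        exact hred j k hjk (f j) (hf j) (f k) (hf k)
  · push_neg at hA
    -- every clique is internally blue
    have hblue : ∀ i, ∀ x ∈ Q i, ∀ y ∈ Q i, x ≠ y → c s(x, y) = false := by
      intro i x hx y hy hxy
      simpa using hA i x hx y hy hxy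
    by_cases hB : ∃ i, ∀ x ∈ Q i, c s(v, x) = false
    · obtain ⟨i, hi⟩ := hB
      refine ⟨false, insert v (Q i), ?_, ?_⟩
      · rw [Finset.card_insert_of_notMem (hv i), hcard]
      · intro a ha b hb hab
        simp only [Finset.mem_insert] at ha hb
        rcases ha with rfl | ha <;> rcases hb with rfl | hb
        · exact absurd rfl hab
        · exact hi b hb
        · rw [csymm]; exact hi a ha
        · exact hblue i a ha b hb hab
    · push_neg at hB
      have hB' : ∀ i, ∃ x ∈ Q i, c s(v, x) = true := by
        intro i
        obtain ⟨x, hx, hcx⟩ := hB i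
        exact ⟨x, hx, by simpa using hcx⟩
      choose g hg hcg using hB'
      refine ⟨true, insert v (Finset.univ.image g), ?_, ?_⟩
      · have hinj : Function.Injective g := by
          intro a b hab
          by_contra h
          exact hdis h (hg a) (hab ▸ hg b)
        have : v ∉ Finset.univ.image g := by
          simp only [Finset.mem_image]
          rintro ⟨j, _, rfl⟩
          exact hv j (hg j)
        rw [Finset.card_insert_of_notMem this,
          Finset.card_image_of_injective _ hinj, Finset.card_univ, Fintype.card_fin]
      · intro a ha b hb hab
        simp only [Finset.mem_insert, Finset.mem_image, Finset.mem_univ, true_and] at ha hb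
        rcases ha with rfl | ⟨i, rfl⟩ <;> rcases hb with rfl | ⟨j, rfl⟩
        · exact absurd rfl hab
        · exact hcg j
        · rw [csymm]; exact hcg i
        · have hij : i ≠ j := fun h => hab (by rw [h])
          exact hred i j hij (g i) (hg i) (g j) (hg j)
end
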